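/- arXiv:1905.02913 — 2 statements merged into one kernel-verified Lean document; each statement's English description precedes it below -/
import Mathlib

section
/- Let σ : Σ_R → Σ_R be a two-sided subshift of finite type and φ : Σ_R → ℝ a function with var_k φ ≤ b c^k for all k ≥ 0 (some b > 0, 0 < c < 1). Then there exists a continuous function u : Σ_R → ℝ such that ψ := φ + u∘σ − u also satisfies var_k ψ ≤ b' c'^k for some b' > 0, 0 < c' < 1, and ψ(x) = ψ(y) whenever x_i = y_i for all i ≥ 0. -/
/-!
Bowen's construction. Fix, for every symbol `a` that occurs, a point of the subshift with zeroth
symbol `a`, and let `r x` be `x` with its past replaced by the past of the point fixed for `x 0`.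
Then `u x = ∑ j, (φ (σ^j x) - φ (σ^j (r x)))` converges geometrically, because `σ^j x` and
`σ^j (r x)` agree on the window `|i| ≤ j`.

If `x` and `y` have the same future then `r x = r y`, so
`u x - u y = ∑ j, (φ (σ^j x) - φ (σ^j y))`; the same series for `σ x, σ y` is its tail after the
first term, hence `φ + u ∘ σ - u` takes the same value at `x` and `y`.

If `x` and `y` agree on `|i| ≤ k`, the `j`-th term of `u x - u y` is `O(c^(k-j))` for `j < k` and
`O(c^j)` for all `j`; splitting the series at `k / 2` gives `var_k u = O(c^(k/2)) = O(√c^k)`,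
which is why the Hölder exponent `c` has to be weakened to `√c`.
-/

/-- The two-sided subshift of finite type determined by a 0-1 transition matrix `R`. -/
abbrev Subshift (n : ℕ) (R : Fin n → Fin n → Bool) : Type :=
  {x : ℤ → Fin n // ∀ i : ℤ, R (x i) (x (i + 1)) = true}

/-- The left shift on a two-sided subshift of finite type. -/
def Subshift.shift {n : ℕ} {R : Fin n → Fin n → Bool} (x : Subshift n R) : Subshift n R :=
  ⟨fun i => x.1 (i + 1), fun i => x.2 (i + 1)⟩

theorem abs_tsum_le_of_abs_le_geometric_from_both_ends {D : ℕ → ℝ} {A c : ℝ} {k : ℕ}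
    (hc0 : 0 ≤ c) (hc1 : c < 1) (hD : Summable D)
    (hhead : ∀ j < k, |D j| ≤ A * c ^ (k - 1 - j)) (htail : ∀ j, |D j| ≤ A * c ^ j) :
    |∑' j, D j| ≤ 2 * A / (1 - c) * c ^ (k / 2) := by
  set s := k / 2
  have hA : 0 ≤ A := by simpa using (abs_nonneg (D 0)).trans (htail 0)
  have hgeom := hasSum_geometric_of_lt_one hc0 hc1
  have head : |∑ j ∈ Finset.range s, D j| ≤ A * c ^ s * (1 - c)⁻¹ := by
    calc |∑ j ∈ Finset.range s, D j|
        ≤ ∑ j ∈ Finset.range s, A * c ^ s * c ^ (s - 1 - j) := by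
          refine (Finset.abs_sum_le_sum_abs _ _).trans (Finset.sum_le_sum fun j hj => ?_)
          have hj : j < s := Finset.mem_range.1 hj
          calc |D j| ≤ A * c ^ (k - 1 - j) := hhead j (by omega)
            _ ≤ A * c ^ (s + (s - 1 - j)) :=
              mul_le_mul_of_nonneg_left (pow_le_pow_of_le_one hc0 hc1.le (by omega)) hA
            _ = A * c ^ s * c ^ (s - 1 - j) := by rw [pow_add, mul_assoc]
      _ = A * c ^ s * ∑ j ∈ Finset.range s, c ^ j := by
          rw [← Finset.mul_sum, Finset.sum_range_reflect (c ^ ·) s]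
      _ ≤ A * c ^ s * (1 - c)⁻¹ := by
          gcongr
          exact (hgeom.summable.sum_le_tsum _ fun j _ => by positivity).trans_eq hgeom.tsum_eq
  have tail : |∑' j, D (j + s)| ≤ A * c ^ s * (1 - c)⁻¹ := by
    refine tsum_of_norm_bounded (f := fun j => D (j + s)) (hgeom.mul_left (A * c ^ s))
      fun j => ?_
    calc ‖D (j + s)‖ ≤ A * c ^ (j + s) := htail _
      _ = A * c ^ s * c ^ j := by ring
  rw [← hD.sum_add_tsum_nat_add s]
  calc _ ≤ _ := abs_add_le _ _
    _ ≤ A * c ^ s * (1 - c)⁻¹ + A * c ^ s * (1 - c)⁻¹ := add_le_add head tail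
    _ = 2 * A / (1 - c) * c ^ s := by ring

theorem pow_div_two_le_sqrt_pow_div {c : ℝ} (hc0 : 0 < c) (hc1 : c ≤ 1) (k : ℕ) :
    c ^ (k / 2) ≤ √c ^ k / √c := by
  rw [le_div_iff₀ (Real.sqrt_pos.2 hc0)]
  calc c ^ (k / 2) * √c = √c ^ (2 * (k / 2) + 1) := by
        rw [pow_succ, pow_mul, Real.sq_sqrt hc0.le]
    _ ≤ √c ^ k :=
        pow_le_pow_of_le_one (Real.sqrt_nonneg c) (Real.sqrt_le_one.2 hc1) (by omega)

open Filter Topology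

namespace Subshift

variable {n : ℕ} {R : Fin n → Fin n → Bool}

theorem shift_iterate_apply (j : ℕ) (x : Subshift n R) (i : ℤ) :
    (shift^[j] x).1 i = x.1 (i + j) := by
  induction j generalizing x with
  | zero => simp
  | succ j ih =>
    rw [Function.iterate_succ_apply, ih]
    simp only [shift]
    push_cast
    ring_nf

def splice (z x : Subshift n R) (h : z.1 0 = x.1 0) : Subshift n R :=
  ⟨fun i => if 0 ≤ i then x.1 i else z.1 i, by
    intro i
    rcases lt_trichotomy i (-1) with hi | rfl | hi
    · simp only [if_neg (by omega : ¬ 0 ≤ i), if_neg (by omega : ¬ 0 ≤ i + 1)]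
      exact z.2 i
    · simpa [← h] using z.2 (-1)
    · simp only [if_pos (by omega : 0 ≤ i), if_pos (by omega : 0 ≤ i + 1)]
      exact x.2 i⟩

noncomputable def anchor (x : Subshift n R) : Subshift n R :=
  Classical.choose (⟨x, rfl⟩ : ∃ z : Subshift n R, z.1 0 = x.1 0)

theorem anchor_apply_zero (x : Subshift n R) : (anchor x).1 0 = x.1 0 :=
  Classical.choose_spec (⟨x, rfl⟩ : ∃ z : Subshift n R, z.1 0 = x.1 0)

theorem anchor_congr {x y : Subshift n R} (h : x.1 0 = y.1 0) : anchor x = anchor y := by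
  simp only [anchor, h]

noncomputable def resetPast (x : Subshift n R) : Subshift n R :=
  splice (anchor x) x (anchor_apply_zero x)

theorem resetPast_apply (x : Subshift n R) (i : ℤ) :
    (resetPast x).1 i = if 0 ≤ i then x.1 i else (anchor x).1 i := rfl

theorem resetPast_apply_of_nonneg (x : Subshift n R) {i : ℤ} (hi : 0 ≤ i) :
    (resetPast x).1 i = x.1 i := if_pos hi

theorem resetPast_congr {x y : Subshift n R} (h : ∀ i : ℤ, 0 ≤ i → x.1 i = y.1 i) :
    resetPast x = resetPast y := by
  refine Subtype.ext (funext fun i => ?_)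
  simp only [resetPast_apply, anchor_congr (h 0 le_rfl)]
  split_ifs with hi
  exacts [h i hi, rfl]

theorem resetPast_agree {k : ℕ} {x y : Subshift n R}
    (h : ∀ i : ℤ, -k ≤ i → i < k → x.1 i = y.1 i) :
    ∀ i : ℤ, -k ≤ i → i < k → (resetPast x).1 i = (resetPast y).1 i := by
  intro i hi₁ hi₂
  simp only [resetPast_apply]
  split_ifs with hi
  · exact h i hi₁ hi₂
  · rw [anchor_congr (h 0 (by omega) (by omega))]

def HasVariationBound (φ : Subshift n R → ℝ) (b c : ℝ) : Prop :=
  ∀ k : ℕ, ∀ x y : Subshift n R,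
    (∀ i : ℤ, |i| ≤ (k : ℤ) → x.1 i = y.1 i) → |φ x - φ y| ≤ b * c ^ k

theorem HasVariationBound.nonneg {φ : Subshift n R → ℝ} {b c : ℝ} (hφ : HasVariationBound φ b c)
    (x : Subshift n R) : 0 ≤ b := by
  simpa using (abs_nonneg _).trans (hφ 0 x x fun _ _ => rfl)

theorem HasVariationBound.continuous {f : Subshift n R → ℝ} {B q : ℝ}
    (hf : HasVariationBound f B q) (hq0 : 0 ≤ q) (hq1 : q < 1) : Continuous f := by
  refine continuous_iff_continuousAt.2 fun x => Metric.tendsto_nhds.2 fun ε hε => ?_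
  have hlim : Tendsto (fun k : ℕ => B * q ^ k) atTop (𝓝 0) := by
    simpa using (tendsto_pow_atTop_nhds_zero_of_lt_one hq0 hq1).const_mul B
  obtain ⟨k, hk⟩ := (hlim.eventually_lt_const hε).exists
  have hcyl : IsOpen {y : Subshift n R | ∀ i ∈ Set.Icc (-(k : ℤ)) k, y.1 i = x.1 i} :=
    (isOpen_set_pi (Set.finite_Icc _ _) fun _ _ => isOpen_discrete {x.1 _}).preimage
      continuous_subtype_val
  filter_upwards [hcyl.mem_nhds fun _ _ => rfl] with y hy
  exact (hf k y x fun i hi => hy i (abs_le.1 hi)).trans_lt hk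

section Transfer

variable {φ : Subshift n R → ℝ} {b c : ℝ}

theorem abs_sub_shift_iterate_le (hφ : HasVariationBound φ b c) {x y : Subshift n R}
    (h : ∀ i : ℤ, 0 ≤ i → x.1 i = y.1 i) (j : ℕ) :
    |φ (shift^[j] x) - φ (shift^[j] y)| ≤ b * c ^ j :=
  hφ j _ _ fun i hi => by
    rw [shift_iterate_apply, shift_iterate_apply]
    exact h _ (by rw [abs_le] at hi; omega)

theorem summable_sub_shift_iterate (hφ : HasVariationBound φ b c) (hc0 : 0 ≤ c) (hc1 : c < 1)
    {x y : Subshift n R} (h : ∀ i : ℤ, 0 ≤ i → x.1 i = y.1 i) :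
    Summable fun j : ℕ => φ (shift^[j] x) - φ (shift^[j] y) :=
  .of_norm_bounded ((summable_geometric_of_lt_one hc0 hc1).mul_left b)
    (abs_sub_shift_iterate_le hφ h)

noncomputable def bowenTransfer (φ : Subshift n R → ℝ) (x : Subshift n R) : ℝ :=
  ∑' j : ℕ, (φ (shift^[j] x) - φ (shift^[j] (resetPast x)))

theorem summable_sub_shift_iterate_resetPast (hφ : HasVariationBound φ b c) (hc0 : 0 ≤ c)
    (hc1 : c < 1) (x : Subshift n R) :
    Summable fun j : ℕ => φ (shift^[j] x) - φ (shift^[j] (resetPast x)) :=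
  summable_sub_shift_iterate hφ hc0 hc1 fun _ hi => (resetPast_apply_of_nonneg x hi).symm

theorem bowenTransfer_sub_eq_tsum (hφ : HasVariationBound φ b c) (hc0 : 0 ≤ c) (hc1 : c < 1)
    {x y : Subshift n R} (h : ∀ i : ℤ, 0 ≤ i → x.1 i = y.1 i) :
    bowenTransfer φ x - bowenTransfer φ y = ∑' j : ℕ, (φ (shift^[j] x) - φ (shift^[j] y)) := by
  rw [bowenTransfer, bowenTransfer,
    ← (summable_sub_shift_iterate_resetPast hφ hc0 hc1 x).tsum_sub
      (summable_sub_shift_iterate_resetPast hφ hc0 hc1 y), resetPast_congr h]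
  exact tsum_congr fun j => by ring

theorem add_bowenTransfer_shift_sub_eq (hφ : HasVariationBound φ b c) (hc0 : 0 ≤ c)
    (hc1 : c < 1) {x y : Subshift n R} (h : ∀ i : ℤ, 0 ≤ i → x.1 i = y.1 i) :
    φ x + bowenTransfer φ x.shift - bowenTransfer φ x =
      φ y + bowenTransfer φ y.shift - bowenTransfer φ y := by
  have hu := bowenTransfer_sub_eq_tsum hφ hc0 hc1 h
  have hu_shift := bowenTransfer_sub_eq_tsum hφ hc0 hc1 (x := x.shift) (y := y.shift)
    fun i hi => h (i + 1) (by omega)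
  rw [(summable_sub_shift_iterate hφ hc0 hc1 h).tsum_eq_zero_add] at hu
  simp only [Function.iterate_succ_apply, Function.iterate_zero_apply] at hu
  linarith

-- The half-open window `[-k, k)` is inherited from agreement on `|i| ≤ k` by both `(x, y)` and
-- `(σ x, σ y)`, also for `k = 0`.
theorem abs_bowenTransfer_sub_le (hφ : HasVariationBound φ b c) (hc0 : 0 ≤ c) (hc1 : c < 1)
    {k : ℕ} {x y : Subshift n R} (h : ∀ i : ℤ, -k ≤ i → i < k → x.1 i = y.1 i) :
    |bowenTransfer φ x - bowenTransfer φ y| ≤ 4 * b / (1 - c) * c ^ (k / 2) := by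
  have hwindow : ∀ {x y : Subshift n R}, (∀ i : ℤ, -k ≤ i → i < k → x.1 i = y.1 i) →
      ∀ j < k, |φ (shift^[j] x) - φ (shift^[j] y)| ≤ b * c ^ (k - 1 - j) :=
    fun h j hj => hφ _ _ _ fun i hi => by
      rw [shift_iterate_apply, shift_iterate_apply]
      rw [abs_le] at hi
      exact h _ (by omega) (by omega)
  have hsum_x := summable_sub_shift_iterate_resetPast hφ hc0 hc1 x
  have hsum_y := summable_sub_shift_iterate_resetPast hφ hc0 hc1 y
  rw [bowenTransfer, bowenTransfer, ← hsum_x.tsum_sub hsum_y]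
  refine (abs_tsum_le_of_abs_le_geometric_from_both_ends (A := 2 * b) hc0 hc1
    (hsum_x.sub hsum_y) (fun j hj => ?_) (fun j => ?_)).trans_eq (by ring)
  · have h₁ := abs_le.1 (hwindow h j hj)
    have h₂ := abs_le.1 (hwindow (resetPast_agree h) j hj)
    exact abs_le.2 ⟨by linarith, by linarith⟩
  · have h₁ := abs_le.1 (abs_sub_shift_iterate_le hφ
      (fun _ hi => (resetPast_apply_of_nonneg x hi).symm) j)
    have h₂ := abs_le.1 (abs_sub_shift_iterate_le hφ
      (fun _ hi => (resetPast_apply_of_nonneg y hi).symm) j)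
    exact abs_le.2 ⟨by linarith, by linarith⟩

theorem abs_bowenTransfer_sub_le_sqrt (hφ : HasVariationBound φ b c) (hc0 : 0 < c)
    (hc1 : c < 1) {k : ℕ} {x y : Subshift n R} (h : ∀ i : ℤ, -k ≤ i → i < k → x.1 i = y.1 i) :
    |bowenTransfer φ x - bowenTransfer φ y| ≤ 4 * b / (1 - c) / √c * √c ^ k := by
  have hb : 0 ≤ 4 * b / (1 - c) := by
    have := hφ.nonneg x
    have := sub_pos.2 hc1
    positivity
  calc _ ≤ 4 * b / (1 - c) * c ^ (k / 2) := abs_bowenTransfer_sub_le hφ hc0.le hc1 h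
    _ ≤ 4 * b / (1 - c) * (√c ^ k / √c) :=
        mul_le_mul_of_nonneg_left (pow_div_two_le_sqrt_pow_div hc0 hc1.le k) hb
    _ = 4 * b / (1 - c) / √c * √c ^ k := by ring

theorem hasVariationBound_bowenTransfer (hφ : HasVariationBound φ b c) (hc0 : 0 < c)
    (hc1 : c < 1) : HasVariationBound (bowenTransfer φ) (4 * b / (1 - c) / √c) √c :=
  fun _ _ _ h =>
    abs_bowenTransfer_sub_le_sqrt hφ hc0 hc1 fun i h₁ h₂ => h i (abs_le.2 ⟨h₁, h₂.le⟩)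

theorem hasVariationBound_add_bowenTransfer_shift_sub (hφ : HasVariationBound φ b c)
    (hc0 : 0 < c) (hc1 : c < 1) :
    HasVariationBound (fun x => φ x + bowenTransfer φ x.shift - bowenTransfer φ x)
      (b + 2 * (4 * b / (1 - c) / √c)) √c := by
  intro k x y h
  have hφk := abs_le.1 <| (hφ k x y h).trans <| mul_le_mul_of_nonneg_left
    (pow_le_pow_left₀ hc0.le (Real.le_sqrt_self_iff.2 hc1.le) k) (hφ.nonneg x)
  have hu := abs_le.1 <| abs_bowenTransfer_sub_le_sqrt hφ hc0 hc1 (k := k) (x := x) (y := y)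
    fun i h₁ h₂ => h i (abs_le.2 ⟨h₁, h₂.le⟩)
  have hu_shift := abs_le.1 <| abs_bowenTransfer_sub_le_sqrt hφ hc0 hc1 (k := k)
    (x := x.shift) (y := y.shift) fun i h₁ h₂ => h (i + 1) (abs_le.2 ⟨by omega, by omega⟩)
  exact abs_le.2 ⟨by linarith, by linarith⟩

end Transfer

end Subshift

/-- Bowen's lemma: if `var_k φ ≤ b c^k` on a two-sided subshift of finite type, then there
is a continuous `u` such that `ψ := φ + u ∘ σ − u` satisfies `var_k ψ ≤ b' c'^k` and `ψ`
depends only on the coordinates with nonnegative index. -/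
theorem stmt4 {n : ℕ} (R : Fin n → Fin n → Bool) (φ : Subshift n R → ℝ)
    (b c : ℝ) (hb : 0 < b) (hc : c ∈ Set.Ioo (0 : ℝ) 1)
    (hvar : ∀ k : ℕ, ∀ x y : Subshift n R,
      (∀ i : ℤ, |i| ≤ (k : ℤ) → x.1 i = y.1 i) → |φ x - φ y| ≤ b * c ^ k) :
    ∃ u : Subshift n R → ℝ, Continuous u ∧
      ∃ b' c' : ℝ, 0 < b' ∧ c' ∈ Set.Ioo (0 : ℝ) 1 ∧
        (∀ k : ℕ, ∀ x y : Subshift n R,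
          (∀ i : ℤ, |i| ≤ (k : ℤ) → x.1 i = y.1 i) →
          |(φ x + u x.shift - u x) - (φ y + u y.shift - u y)| ≤ b' * c' ^ k) ∧
        (∀ x y : Subshift n R, (∀ i : ℤ, 0 ≤ i → x.1 i = y.1 i) →
          φ x + u x.shift - u x = φ y + u y.shift - u y) := by
  obtain ⟨hc0, hc1⟩ := hc
  have hsqrt : √c ∈ Set.Ioo (0 : ℝ) 1 :=
    ⟨Real.sqrt_pos.2 hc0, (Real.sqrt_lt_sqrt hc0.le hc1).trans_eq Real.sqrt_one⟩
  exact ⟨Subshift.bowenTransfer φ,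
    (Subshift.hasVariationBound_bowenTransfer hvar hc0 hc1).continuous hsqrt.1.le hsqrt.2,
    _, √c, by positivity, hsqrt,
    Subshift.hasVariationBound_add_bowenTransfer_shift_sub hvar hc0 hc1,
    fun _ _ h => Subshift.add_bowenTransfer_shift_sub_eq hvar hc0.le hc1 h⟩
end

section
/- For a transitive continuous map f on a compact metric space satisfying the periodic gluing orbit property, given any nonempty open set U ⊂ N, the set of f-invariant probability measures μ with μ(U) = 0 is closed with empty interior in the space of invariant measures with the weak* topology. Consequently, fully supported invariant measures form a residual subset of the space of invariant measures. -/
open MeasureTheory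

/-- The periodic gluing orbit property: for every `ε > 0` there is `m = m(ε) ≥ 1` such
that any finite collection of orbit segments can be `ε`-shadowed by a single periodic
orbit, with time lags at most `m(ε)` between consecutive segments and period equal to
the total length. -/
def PeriodicGluingOrbit {Nm : Type*} [MetricSpace Nm] (f : Nm → Nm) : Prop :=
  ∀ ε : ℝ, 0 < ε → ∃ m : ℕ, 1 ≤ m ∧
    ∀ (k : ℕ) (x : Fin k → Nm) (nseg : Fin k → ℕ),
      ∃ (p : Fin k → ℕ) (y : Nm),
        (∀ i, p i ≤ m) ∧
        f^[∑ i, (nseg i + p i)] y = y ∧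
        ∀ i : Fin k, ∀ j : ℕ, j ≤ nseg i →
          dist (f^[j + ∑ l ∈ Finset.univ.filter (fun l => l < i), (nseg l + p l)] y)
            (f^[j] (x i)) ≤ ε

open Filter Topology unitInterval Function
open scoped ENNReal NNReal

/-! Periodic points are dense, so a nonempty open set `U` contains a periodic orbit, whose
equidistributed measure `ω` is invariant and charges `U`. For any invariant `μ` the mixtures
`(1 - t) μ + t ω`, `t > 0`, are invariant, charge `U`, and tend to `μ` as `t → 0`; so
`{μ | μ U = 0}` has empty interior. It is closed because `μ ↦ μ U` is lower semicontinuous for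
open `U` (portmanteau). Intersecting the open dense complements over a countable basis gives the
residual set of fully supported invariant measures. -/

namespace MeasureTheory.ProbabilityMeasure

variable {X : Type*} [MeasurableSpace X]

noncomputable def mix (μ ν : ProbabilityMeasure X) (t : I) : ProbabilityMeasure X :=
  ⟨toNNReal (σ t) • (μ : Measure X) + toNNReal t • (ν : Measure X),
    ⟨by simp [← ENNReal.coe_add]⟩⟩

section Mix

variable (μ ν : ProbabilityMeasure X)

theorem toMeasure_mix (t : I) :
    (mix μ ν t : Measure X) = toNNReal (σ t) • (μ : Measure X) + toNNReal t • (ν : Measure X) :=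
  rfl

@[simp]
theorem mix_zero : mix μ ν 0 = μ := by
  ext1
  simp [toMeasure_mix]

theorem continuous_mix [TopologicalSpace X] [OpensMeasurableSpace X] : Continuous (mix μ ν) := by
  refine continuous_iff_forall_continuous_integral.2 fun g => ?_
  have h (t : I) : ∫ x, g x ∂(mix μ ν t : Measure X)
      = (σ t : ℝ) * ∫ x, g x ∂(μ : Measure X) + t * ∫ x, g x ∂(ν : Measure X) := by
    rw [toMeasure_mix, integral_add_measure (g.integrable _).smul_measure_nnreal
      (g.integrable _).smul_measure_nnreal]
    simp [NNReal.smul_def]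
  simp_rw [h]
  fun_prop

variable {μ ν}

theorem mix_apply_ne_zero {t : I} (ht : t ≠ 0) {U : Set X} (hU : (ν : Measure X) U ≠ 0) :
    (mix μ ν t : Measure X) U ≠ 0 := by
  have hνU : toNNReal t • (ν : Measure X) U ≠ 0 :=
    smul_ne_zero (by simpa [← NNReal.coe_eq_zero] using ht) hU
  exact fun h => hνU (le_antisymm (le_add_self.trans_eq h) bot_le)

theorem map_mix_eq_self {f : X → X} (hf : Measurable f) (hμ : (μ : Measure X).map f = μ)
    (hν : (ν : Measure X).map f = ν) (t : I) :
    (mix μ ν t : Measure X).map f = mix μ ν t := by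
  rw [toMeasure_mix, Measure.map_add _ _ hf, Measure.map_smul, Measure.map_smul, hμ, hν]

end Mix

variable [TopologicalSpace X] [OpensMeasurableSpace X]

theorem lowerSemicontinuous_apply_of_isOpen [HasOuterApproxClosed X] {U : Set X}
    (hU : IsOpen U) : LowerSemicontinuous fun μ : ProbabilityMeasure X => (μ : Measure X) U :=
  lowerSemicontinuous_iff_le_liminf.2 fun _ => le_liminf_measure_open_of_tendsto tendsto_id hU

theorem isClosed_setOf_apply_eq_zero [HasOuterApproxClosed X] {U : Set X} (hU : IsOpen U) :
    IsClosed {μ : ProbabilityMeasure X | (μ : Measure X) U = 0} := by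
  convert (lowerSemicontinuous_apply_of_isOpen hU).isClosed_preimage 0 using 1
  ext
  simp

theorem dense_setOf_invariant_apply_ne_zero {f : X → X} (hf : Measurable f)
    {ω : ProbabilityMeasure X} (hω : (ω : Measure X).map f = ω) {U : Set X}
    (hU : (ω : Measure X) U ≠ 0) :
    Dense {μ : {μ : ProbabilityMeasure X // μ.toMeasure.map f = μ.toMeasure} |
      μ.1.toMeasure U ≠ 0} := by
  intro μ
  let g (t : I) : {μ : ProbabilityMeasure X // μ.toMeasure.map f = μ.toMeasure} :=
    ⟨μ.1.mix ω t, map_mix_eq_self hf μ.2 hω t⟩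
  have hg : Continuous g := (continuous_mix _ _).subtype_mk _
  have hμ : g 0 = μ := Subtype.ext (mix_zero _ _)
  refine closure_mono ?_ (hμ ▸ mem_closure_image hg.continuousAt (dense_compl_singleton 0 0))
  rintro _ ⟨t, ht, rfl⟩
  exact mix_apply_ne_zero ht hU

end MeasureTheory.ProbabilityMeasure

section OrbitMeasure

variable {X : Type*} [MeasurableSpace X] (f : X → X) (y : X) (n : ℕ)

noncomputable def orbitMeasure : Measure X :=
  (n : ℝ≥0∞)⁻¹ • ∑ j ∈ Finset.range n, Measure.dirac (f^[j] y)

variable {f y n}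

theorem isProbabilityMeasure_orbitMeasure (hn : n ≠ 0) :
    IsProbabilityMeasure (orbitMeasure f y n) :=
  ⟨by simp [orbitMeasure, ENNReal.inv_mul_cancel (Nat.cast_ne_zero.2 hn)]⟩

theorem orbitMeasure_apply_ne_zero (hn : n ≠ 0) {U : Set X} (hy : y ∈ U) :
    orbitMeasure f y n U ≠ 0 := by
  rw [orbitMeasure, Measure.smul_apply, Measure.finsetSum_apply, smul_eq_mul]
  refine mul_ne_zero (ENNReal.inv_ne_zero.2 (ENNReal.natCast_ne_top n)) ?_
  rw [Ne, Finset.sum_eq_zero_iff, not_forall]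
  exact ⟨0, by simp [Measure.dirac_apply_of_mem hy, Nat.pos_of_ne_zero hn]⟩

theorem map_orbitMeasure (hf : Measurable f) (hy : IsPeriodicPt f n y) :
    (orbitMeasure f y n).map f = orbitMeasure f y n := by
  simp only [orbitMeasure, Measure.map_smul, Measure.map_finset_sum hf.aemeasurable,
    Measure.map_dirac' hf, ← iterate_succ_apply' f]
  congr 1
  cases n with
  | zero => simp
  | succ m => rw [Finset.sum_range_succ, Finset.sum_range_succ', hy.eq, iterate_zero_apply]

end OrbitMeasure

namespace PeriodicGluingOrbit

variable {X : Type*} [MetricSpace X] {f : X → X}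

theorem dense_periodicPts (hglue : PeriodicGluingOrbit f) : Dense (periodicPts f) := by
  refine Metric.dense_iff.2 fun x r hr => ?_
  obtain ⟨m, -, hm⟩ := hglue (r / 2) (half_pos hr)
  -- a segment of length one makes the period `1 + p 0` positive
  obtain ⟨p, y, -, hper, hshadow⟩ := hm 1 (fun _ => x) (fun _ => 1)
  have hdist := hshadow 0 0 zero_le_one
  simp only [Fin.sum_univ_one, Fin.not_lt_zero, Finset.filter_false, Finset.sum_empty,
    add_zero, iterate_zero_apply] at hper hdist
  exact ⟨y, Metric.mem_ball.2 (by linarith), 1 + p 0, by omega, hper⟩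

theorem dense_setOf_invariant_apply_ne_zero [MeasurableSpace X] [BorelSpace X]
    (hf : Continuous f) (hglue : PeriodicGluingOrbit f) {U : Set X} (hU : IsOpen U)
    (hne : U.Nonempty) :
    Dense {μ : {μ : ProbabilityMeasure X // μ.toMeasure.map f = μ.toMeasure} |
      μ.1.toMeasure U ≠ 0} := by
  obtain ⟨y, hyU, n, hn, hy⟩ := hglue.dense_periodicPts.inter_open_nonempty U hU hne
  let ω : ProbabilityMeasure X :=
    ⟨orbitMeasure f y n, isProbabilityMeasure_orbitMeasure hn.ne'⟩
  exact ProbabilityMeasure.dense_setOf_invariant_apply_ne_zero (ω := ω) hf.measurable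
    (map_orbitMeasure hf.measurable hy) (orbitMeasure_apply_ne_zero hn.ne' hyU)

end PeriodicGluingOrbit

theorem setOf_forall_isOpen_pos_mem_residual {X Y : Type*} [TopologicalSpace X]
    [SecondCountableTopology X] [MeasurableSpace X] [TopologicalSpace Y] (ρ : Y → Measure X)
    (h : ∀ U : Set X, IsOpen U → U.Nonempty →
      IsClosed {y | ρ y U = 0} ∧ interior {y | ρ y U = 0} = ∅) :
    {y | ∀ U : Set X, IsOpen U → U.Nonempty → 0 < ρ y U} ∈ residual Y := by
  obtain ⟨B, hBc, hBempty, hB⟩ := TopologicalSpace.exists_countable_basis X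
  have hres : (⋂ U ∈ B, {y | ρ y U = 0}ᶜ) ∈ residual Y := by
    refine (countable_bInter_mem hBc).2 fun U hU => ?_
    obtain ⟨hclosed, hint⟩ :=
      h U (hB.isOpen hU) (Set.nonempty_iff_ne_empty.2 (ne_of_mem_of_not_mem hU hBempty))
    exact residual_of_dense_open hclosed.isOpen_compl (interior_eq_empty_iff_dense_compl.1 hint)
  refine mem_of_superset hres fun y hy V hV ⟨x, hx⟩ => ?_
  obtain ⟨W, hWB, -, hWV⟩ := hB.exists_subset_of_mem_open hx hV
  exact (pos_iff_ne_zero.2 (Set.mem_iInter₂.1 hy W hWB)).trans_le (measure_mono hWV)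

theorem stmt17_general {Nm : Type*} [MetricSpace Nm]
    [SecondCountableTopology Nm] [MeasurableSpace Nm] [BorelSpace Nm]
    (f : Nm → Nm) (hf : Continuous f)
    (hglue : PeriodicGluingOrbit f) :
    (∀ U : Set Nm, IsOpen U → U.Nonempty →
      IsClosed {μ : {μ : ProbabilityMeasure Nm // μ.toMeasure.map f = μ.toMeasure} |
          μ.1.toMeasure U = 0} ∧
      interior {μ : {μ : ProbabilityMeasure Nm // μ.toMeasure.map f = μ.toMeasure} |
          μ.1.toMeasure U = 0} = ∅) ∧
    {μ : {μ : ProbabilityMeasure Nm // μ.toMeasure.map f = μ.toMeasure} |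
        ∀ U : Set Nm, IsOpen U → U.Nonempty → 0 < μ.1.toMeasure U} ∈
      residual {μ : ProbabilityMeasure Nm // μ.toMeasure.map f = μ.toMeasure} := by
  have hnull (U : Set Nm) (hU : IsOpen U) (hne : U.Nonempty) :
      IsClosed {μ : {μ : ProbabilityMeasure Nm // μ.toMeasure.map f = μ.toMeasure} |
          μ.1.toMeasure U = 0} ∧
      interior {μ : {μ : ProbabilityMeasure Nm // μ.toMeasure.map f = μ.toMeasure} |
          μ.1.toMeasure U = 0} = ∅ :=
    ⟨(ProbabilityMeasure.isClosed_setOf_apply_eq_zero hU).preimage continuous_subtype_val,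
      interior_eq_empty_iff_dense_compl.2 (hglue.dense_setOf_invariant_apply_ne_zero hf hU hne)⟩
  exact ⟨hnull, setOf_forall_isOpen_pos_mem_residual _ hnull⟩

/-- For a transitive continuous map with the periodic gluing orbit property, for every
nonempty open `U` the set of invariant probability measures `μ` with `μ(U) = 0` is
closed with empty interior in the space of invariant measures (weak* topology); hence
fully supported invariant measures form a residual subset of the space of invariant
measures. -/
theorem stmt17 {Nm : Type*} [MetricSpace Nm] [CompactSpace Nm]
    [SecondCountableTopology Nm] [MeasurableSpace Nm] [BorelSpace Nm]
    (f : Nm → Nm) (hf : Continuous f)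
    (htrans : ∃ x : Nm, Dense (Set.range fun n : ℕ => f^[n] x))
    (hglue : PeriodicGluingOrbit f) :
    (∀ U : Set Nm, IsOpen U → U.Nonempty →
      IsClosed {μ : {μ : ProbabilityMeasure Nm // μ.toMeasure.map f = μ.toMeasure} |
          μ.1.toMeasure U = 0} ∧
      interior {μ : {μ : ProbabilityMeasure Nm // μ.toMeasure.map f = μ.toMeasure} |
          μ.1.toMeasure U = 0} = ∅) ∧
    {μ : {μ : ProbabilityMeasure Nm // μ.toMeasure.map f = μ.toMeasure} |
        ∀ U : Set Nm, IsOpen U → U.Nonempty → 0 < μ.1.toMeasure U} ∈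
      residual {μ : ProbabilityMeasure Nm // μ.toMeasure.map f = μ.toMeasure} :=
  stmt17_general f hf hglue
end
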